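/- arXiv:1507.02384 — 2 statements merged into one kernel-verified Lean document; each statement's English description precedes it below -/
import Mathlib

section
/- Let G be a finite simple bipartite graph with bipartition (A,B), let M be a maximum matching of G, and let C be a minimum vertex cover of G. Then C equals the A-König cover of G constructed from M if and only if every minimum vertex cover C' of G satisfies A ∩ C' ⊆ A ∩ C and B ∩ C ⊆ B ∩ C'. -/
open SimpleGraph

/-- A vertex cover of a graph: a set of vertices containing at least one endpoint
of every edge. -/
def IsVertexCover {V : Type} (G : SimpleGraph V) (C : Set V) : Prop :=
  ∀ ⦃u v : V⦄, G.Adj u v → u ∈ C ∨ v ∈ C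

/-- A minimum vertex cover: a vertex cover of smallest cardinality. -/
def IsMinVertexCover {V : Type} (G : SimpleGraph V) (C : Set V) : Prop :=
  _root_.IsVertexCover G C ∧ ∀ C' : Set V, _root_.IsVertexCover G C' → C.ncard ≤ C'.ncard

/-- `(A, B)` is a bipartition of `G`: `A` and `B` are disjoint, cover all vertices,
and every edge joins a vertex of `A` to a vertex of `B`. -/
def IsBipartition {V : Type} (G : SimpleGraph V) (A B : Set V) : Prop :=
  Disjoint A B ∧ A ∪ B = Set.univ ∧
    ∀ ⦃u v : V⦄, G.Adj u v → (u ∈ A ∧ v ∈ B) ∨ (u ∈ B ∧ v ∈ A)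

/-- A matching of `G`: a set of edges of `G` that are pairwise vertex-disjoint. -/
def IsMatching' {V : Type} (G : SimpleGraph V) (M : Set (Sym2 V)) : Prop :=
  M ⊆ G.edgeSet ∧ ∀ e ∈ M, ∀ f ∈ M, e ≠ f → ∀ v : V, ¬ (v ∈ e ∧ v ∈ f)

/-- A maximum matching: a matching of largest cardinality. -/
def IsMaxMatching {V : Type} (G : SimpleGraph V) (M : Set (Sym2 V)) : Prop :=
  IsMatching' G M ∧ ∀ M' : Set (Sym2 V), IsMatching' G M' → M'.ncard ≤ M.ncard

/-- A vertex is `M`-saturated if it is an endpoint of some edge of `M`. -/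
def MSaturated {V : Type} (M : Set (Sym2 V)) (v : V) : Prop :=
  ∃ e ∈ M, v ∈ e

/-- A list of edges is `M`-alternating if consecutive edges alternate between
membership and non-membership in `M`. -/
def AlternatingEdges {V : Type} (M : Set (Sym2 V)) (l : List (Sym2 V)) : Prop :=
  List.IsChain (fun e f => (e ∈ M ↔ f ∉ M)) l

/-- The edge `e` lies on an `M`-alternating path starting at an `M`-unsaturated
vertex of `A`. -/
def OnAltPath {V : Type} (G : SimpleGraph V) (M : Set (Sym2 V)) (A : Set V)
    (e : Sym2 V) : Prop :=
  ∃ (a z : V) (p : G.Walk a z), a ∈ A ∧ ¬ MSaturated M a ∧ p.IsPath ∧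
    AlternatingEdges M p.edges ∧ e ∈ p.edges

/-- The `A`-König cover of `G` constructed from a maximum matching `M`: for each
edge `ab ∈ M` with `a ∈ A` and `b ∈ B`, put `b` into the cover if `ab` lies on an
`M`-alternating path starting at an `M`-unsaturated vertex of `A`, and otherwise
put `a` into the cover. -/
def koenigCoverFrom {V : Type} (G : SimpleGraph V) (M : Set (Sym2 V))
    (A B : Set V) : Set V :=
  {b | b ∈ B ∧ ∃ e ∈ M, b ∈ e ∧ OnAltPath G M A e} ∪
    {a | a ∈ A ∧ ∃ e ∈ M, a ∈ e ∧ ¬ OnAltPath G M A e}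

/-- `C` is the `A`-König cover of the bipartite graph `G` with bipartition `(A,B)`:
the unique minimum vertex cover such that every minimum vertex cover `C'`
satisfies `A ∩ C' ⊆ A ∩ C` and `B ∩ C ⊆ B ∩ C'`. -/
def IsKoenigCover {V : Type} (G : SimpleGraph V) (A B : Set V) (C : Set V) : Prop :=
  IsMinVertexCover G C ∧
    ∀ C' : Set V, IsMinVertexCover G C' → A ∩ C' ⊆ A ∩ C ∧ B ∩ C ⊆ B ∩ C'

/-- `G[S,T]`: the bipartite graph on the vertices of `G` whose edges are exactly
the edges of `G` with one endpoint in `S` and the other in `T`. -/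
def crossingGraph {V : Type} (G : SimpleGraph V) (S T : Set V) : SimpleGraph V where
  Adj u v := G.Adj u v ∧ ((u ∈ S ∧ v ∈ T) ∨ (u ∈ T ∧ v ∈ S))
  symm := ⟨fun u v h =>
    ⟨h.1.symm, h.2.elim (fun h' => Or.inr ⟨h'.2, h'.1⟩) (fun h' => Or.inl ⟨h'.2, h'.1⟩)⟩⟩
  loopless := ⟨fun u h => G.irrefl h.1⟩

/-!
A vertex cover of `G` contains an endpoint of each edge of `M`, so it has at least `|M|`
vertices. The König cover `K` is a vertex cover, since `M` has no augmenting path, and it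
consists of exactly one endpoint of each edge of `M`; so `|K| = |M|`, and every minimum vertex
cover `C'` also consists of exactly one endpoint of each edge of `M`.

Both `B` and `C'` are then vertex covers meeting each edge of `M` at most once, and such a set is
left along an `M`-alternating walk exactly through the edges of `M`. An alternating path from an
unsaturated vertex of `A` starts outside both sets, so on each of its `M`-edges `C'` picks the
endpoint in `B`, as `K` does. This gives `A ∩ C' ⊆ A ∩ K` and `B ∩ K ⊆ B ∩ C'`; a minimum cover
`C` with the same extremal property therefore agrees with `K` on `A` and on `B`.
-/

section

variable {V : Type} {G : SimpleGraph V} {M : Set (Sym2 V)} {A B C : Set V}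

theorem IsMatching'.eq_of_mem (hM : IsMatching' G M) {e f : Sym2 V} (he : e ∈ M) (hf : f ∈ M)
    {v : V} (hve : v ∈ e) (hvf : v ∈ f) : e = f :=
  by_contra fun hef => hM.2 e he f hf hef v ⟨hve, hvf⟩

namespace IsBipartition

theorem mem_left_iff (h : IsBipartition G A B) {v : V} : v ∈ A ↔ v ∉ B :=
  ⟨fun hA hB => Set.disjoint_left.mp h.1 hA hB,
    fun hB => ((h.2.1 ▸ Set.mem_univ v : v ∈ A ∪ B)).resolve_right hB⟩

theorem mem_right_iff_of_adj (h : IsBipartition G A B) {u v : V} (huv : G.Adj u v) :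
    u ∈ B ↔ v ∉ B := by
  rcases h.2.2 huv with ⟨hu, hv⟩ | ⟨hu, hv⟩
  · exact iff_of_false (h.mem_left_iff.1 hu) (not_not.2 hv)
  · exact iff_of_true hu (h.mem_left_iff.1 hv)

theorem isVertexCover_right (h : IsBipartition G A B) : _root_.IsVertexCover G B :=
  fun _ _ huv => or_iff_not_imp_right.2 (h.mem_right_iff_of_adj huv).2

theorem exists_mem_left (h : IsBipartition G A B) {e : Sym2 V} (he : e ∈ G.edgeSet) :
    ∃ x ∈ e, x ∈ A := by
  induction e using Sym2.ind with
  | _ x y =>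
    rcases h.2.2 he with ⟨hx, -⟩ | ⟨-, hy⟩
    exacts [⟨x, Sym2.mem_mk_left x y, hx⟩, ⟨y, Sym2.mem_mk_right x y, hy⟩]

theorem eq_of_inter_eq (h : IsBipartition G A B) {C D : Set V} (hA : A ∩ C = A ∩ D)
    (hB : B ∩ C = B ∩ D) : C = D := by
  rw [← Set.univ_inter C, ← Set.univ_inter D, ← h.2.1, Set.union_inter_distrib_right,
    Set.union_inter_distrib_right, hA, hB]

end IsBipartition

def IsTransversal (M : Set (Sym2 V)) (C : Set V) : Prop :=
  (∀ v ∈ C, MSaturated M v) ∧ ∀ ⦃u v : V⦄, s(u, v) ∈ M → (u ∈ C ↔ v ∉ C)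

theorem IsTransversal.ncard_eq (hM : IsMatching' G M) (hC : IsTransversal M C) :
    C.ncard = M.ncard := by
  refine Set.ncard_congr (fun v hv => (hC.1 v hv).choose) (fun v hv => (hC.1 v hv).choose_spec.1)
    (fun v w hv hw hvw => ?_) (fun e he => ?_)
  · obtain ⟨he, hve⟩ := (hC.1 v hv).choose_spec
    have hwe := hvw ▸ (hC.1 w hw).choose_spec.2
    obtain ⟨x, hx⟩ := Sym2.mem_iff_exists.mp hve
    rw [hx] at he hwe
    rcases Sym2.mem_iff.mp hwe with rfl | rfl
    · rfl
    · exact absurd hw ((hC.2 he).1 hv)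
  · induction e using Sym2.ind with
    | _ x y =>
      obtain ⟨v, hv, hve⟩ : ∃ v ∈ C, v ∈ s(x, y) := by
        by_cases hx : x ∈ C
        · exact ⟨x, hx, Sym2.mem_mk_left x y⟩
        · exact ⟨y, not_not.1 (mt (hC.2 he).2 hx), Sym2.mem_mk_right x y⟩
      obtain ⟨he', hve'⟩ := (hC.1 v hv).choose_spec
      exact ⟨v, hv, hM.eq_of_mem he' he hve' hve⟩

theorem IsVertexCover.exists_injOn_of_isMatching' (hC : _root_.IsVertexCover G C)
    (hM : IsMatching' G M) :
    ∃ f : Sym2 V → V, (∀ e ∈ M, f e ∈ e ∧ f e ∈ C) ∧ Set.InjOn f M := by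
  have : ∀ e : Sym2 V, ∃ v, e ∈ M → v ∈ e ∧ v ∈ C := by
    refine Sym2.ind fun x y => ?_
    by_cases he : s(x, y) ∈ M
    · rcases hC (hM.1 he) with hx | hy
      exacts [⟨x, fun _ => ⟨Sym2.mem_mk_left x y, hx⟩⟩, ⟨y, fun _ => ⟨Sym2.mem_mk_right x y, hy⟩⟩]
    · exact ⟨x, fun he' => absurd he' he⟩
  choose f hf using this
  exact ⟨f, hf, fun e he e' he' hee' =>
    hM.eq_of_mem he he' (hf e he).1 (hee' ▸ (hf e' he').1)⟩

theorem IsMatching'.ncard_le [Finite V] (hM : IsMatching' G M) (hC : _root_.IsVertexCover G C) :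
    M.ncard ≤ C.ncard := by
  obtain ⟨f, hf, hinj⟩ := hC.exists_injOn_of_isMatching' hM
  exact Set.ncard_le_ncard_of_injOn f (fun e he => (hf e he).2) hinj

theorem IsVertexCover.isTransversal_of_ncard_le [Finite V] (hC : _root_.IsVertexCover G C)
    (hM : IsMatching' G M) (hCM : C.ncard ≤ M.ncard) : IsTransversal M C := by
  obtain ⟨f, hf, hinj⟩ := hC.exists_injOn_of_isMatching' hM
  have himage : f '' M = C :=
    Set.eq_of_subset_of_ncard_le (Set.image_subset_iff.2 fun e he => (hf e he).2)
      (hinj.ncard_image ▸ hCM)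
  refine ⟨fun v hv => ?_, fun u v he => ⟨fun hu hv => ?_, fun hv => ?_⟩⟩
  · obtain ⟨e, he, rfl⟩ := himage ▸ hv
    exact ⟨e, he, (hf e he).1⟩
  · obtain ⟨e₁, he₁, rfl⟩ := himage ▸ hu
    obtain ⟨e₂, he₂, hfe₂⟩ := himage ▸ hv
    have h₁ := hM.eq_of_mem he₁ he (hf e₁ he₁).1 (Sym2.mem_mk_left _ _)
    have h₂ := hM.eq_of_mem he₂ he (hfe₂ ▸ (hf e₂ he₂).1) (Sym2.mem_mk_right _ _)
    exact G.ne_of_adj (hM.1 he) ((congrArg f (h₁.trans h₂.symm)).trans hfe₂)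
  · exact (hC (hM.1 he)).resolve_right hv

namespace SimpleGraph.Walk

theorem alternatingEdges_cons {e : Sym2 V} {l : List (Sym2 V)} :
    AlternatingEdges M (e :: l) ↔ (∀ f ∈ l.head?, e ∈ M ↔ f ∉ M) ∧ AlternatingEdges M l :=
  List.isChain_cons

theorem mem_of_mem_head?_edges {x z : V} (p : G.Walk x z) {e : Sym2 V}
    (he : e ∈ p.edges.head?) : x ∈ e := by
  cases p with
  | nil => simp at he
  | cons h p =>
    obtain rfl : _ = e := Option.some_inj.mp he
    exact Sym2.mem_mk_left _ _

theorem mem_of_mem_getLast?_edges {x z : V} (p : G.Walk x z) {e : Sym2 V}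
    (he : e ∈ p.edges.getLast?) : z ∈ e := by
  rw [← List.head?_reverse, ← edges_reverse] at he
  exact p.reverse.mem_of_mem_head?_edges he

theorem exists_append_eq_of_mem_edges {x z : V} :
    ∀ (p : G.Walk x z) {e : Sym2 V}, e ∈ p.edges →
      ∃ (y : V) (q : G.Walk x y) (r : G.Walk y z), p = q.append r ∧ q.edges.getLast? = some e
  | .nil, _, he => by simp at he
  | .cons h p, e, he => by
    rcases List.mem_cons.mp he with rfl | he
    · exact ⟨_, .cons h .nil, p, rfl, rfl⟩
    · obtain ⟨y, q, r, rfl, hq⟩ := exists_append_eq_of_mem_edges p he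
      exact ⟨y, .cons h q, r, rfl, by rw [edges_cons, List.getLast?_cons, hq]; rfl⟩

/-- An alternating walk leaves `S` exactly along the edges of `M`. -/
theorem mem_iff_of_alternatingEdges {S : Set V} (hS : _root_.IsVertexCover G S)
    (hSM : ∀ ⦃u v : V⦄, G.Adj u v → s(u, v) ∈ M → u ∈ S → v ∉ S) {x z : V} :
    ∀ (p : G.Walk x z), AlternatingEdges M p.edges →
      (∀ e ∈ p.edges.head?, x ∈ S ↔ e ∈ M) → ∀ e ∈ p.edges.getLast?, z ∈ S ↔ e ∉ M
  | .nil, _, _, e, he => by simp at he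
  | @cons _ _ _ y _ h p, halt, hx, e, he => by
    have hxy : x ∈ S ↔ s(x, y) ∈ M := hx _ rfl
    have hy : y ∈ S ↔ s(x, y) ∉ M := by
      by_cases hxyM : s(x, y) ∈ M
      · exact iff_of_false (hSM h hxyM (hxy.2 hxyM)) (not_not.2 hxyM)
      · exact iff_of_true ((hS h).resolve_left (mt hxy.1 hxyM)) hxyM
    cases p with
    | nil => exact Option.some_inj.mp he ▸ hy
    | cons h' p =>
      obtain ⟨hnext, halt⟩ := alternatingEdges_cons.mp halt
      refine mem_iff_of_alternatingEdges hS hSM (.cons h' p) halt (fun f hf => ?_) e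
        (by simpa using he)
      have := hnext f hf
      tauto

theorem exists_mem_of_mem_support {x z : V} :
    ∀ (p : G.Walk x z), AlternatingEdges M p.edges → ∀ {v : V}, v ∈ p.support → v ≠ x → v ≠ z →
      ∃ e ∈ p.edges, e ∈ M ∧ v ∈ e
  | .nil, _, _, hv, hvx, _ => absurd (by simpa using hv) hvx
  | @cons _ _ _ y _ h p, halt, v, hv, hvx, hvz => by
    have hvp : v ∈ p.support := (List.mem_cons.mp hv).resolve_left hvx
    obtain ⟨hnext, halt⟩ := alternatingEdges_cons.mp halt
    by_cases hvy : v = y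
    · subst hvy
      cases p with
      | nil => exact absurd rfl hvz
      | @cons _ w _ h' p =>
        by_cases hvw : s(v, w) ∈ M
        · exact ⟨_, List.mem_cons_of_mem _ (List.mem_cons_self ..), hvw, Sym2.mem_mk_left _ _⟩
        · exact ⟨_, List.mem_cons_self .., (hnext _ rfl).2 hvw, Sym2.mem_mk_right _ _⟩
    · obtain ⟨e, he, heM, hve⟩ := exists_mem_of_mem_support p halt hvp hvy hvz
      exact ⟨e, List.mem_cons_of_mem _ he, heM, hve⟩

theorem IsPath.head?_edges_eq {x z : V} :
    ∀ {p : G.Walk x z}, p.IsPath → ∀ {e : Sym2 V}, e ∈ p.edges → x ∈ e → p.edges.head? = some e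
  | .nil, _, _, he, _ => by simp at he
  | .cons h p, hp, e, he, hx => by
    rcases List.mem_cons.mp he with rfl | he
    · rfl
    · obtain ⟨y, rfl⟩ := Sym2.mem_iff_exists.mp hx
      exact absurd (p.fst_mem_support_of_mem_edges he) ((cons_isPath_iff h p).mp hp).2

/-- Two distinct edges of a path that share a vertex are consecutive on it. -/
theorem IsPath.mem_or_mem_of_alternatingEdges {x z : V} :
    ∀ {p : G.Walk x z}, p.IsPath → AlternatingEdges M p.edges → ∀ {e f : Sym2 V},
      e ∈ p.edges → f ∈ p.edges → e ≠ f → ∀ {v : V}, v ∈ e → v ∈ f → e ∈ M ∨ f ∈ M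
  | .nil, _, _, _, _, he, _, _, _, _, _ => by simp at he
  | @cons _ _ _ y _ h p, hp, halt, e, f, he, hf, hef, v, hve, hvf => by
    obtain ⟨hp, hxp⟩ := (cons_isPath_iff h p).mp hp
    obtain ⟨hnext, halt⟩ := alternatingEdges_cons.mp halt
    have hfirst : ∀ g ∈ p.edges, v ∈ s(x, y) → v ∈ g → s(x, y) ∈ M ∨ g ∈ M := by
      intro g hg hvxy hvg
      obtain ⟨w, rfl⟩ := Sym2.mem_iff_exists.mp hvg
      rcases Sym2.mem_iff.mp hvxy with rfl | rfl
      · exact absurd (p.fst_mem_support_of_mem_edges hg) hxp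
      · have := hnext _ (hp.head?_edges_eq hg (Sym2.mem_mk_left _ _))
        tauto
    rcases List.mem_cons.mp he with rfl | he <;> rcases List.mem_cons.mp hf with rfl | hf
    · exact absurd rfl hef
    · exact hfirst f hf hve hvf
    · exact (hfirst e he hvf hve).symm
    · exact hp.mem_or_mem_of_alternatingEdges halt he hf hef hve hvf

end SimpleGraph.Walk

open Classical in
theorem AlternatingEdges.countP_notMem_eq :
    ∀ {l : List (Sym2 V)}, AlternatingEdges M l → l ≠ [] → (∀ e ∈ l.head?, e ∉ M) →
      (∀ e ∈ l.getLast?, e ∉ M) → l.countP (· ∉ M) = l.countP (· ∈ M) + 1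
  | [], _, hl, _, _ => absurd rfl hl
  | [e], _, _, he, _ => by simp [he e rfl]
  | [e, f], halt, _, he, hf => by
    have := (List.isChain_cons_cons.mp halt).1
    exact absurd (this.2 (hf f rfl)) (he e rfl)
  | e :: f :: g :: l, halt, _, he, hl => by
    obtain ⟨hef, hfg, halt⟩ :=
      List.isChain_cons_cons.mp halt |>.imp_right List.isChain_cons_cons.mp
    have heM : e ∉ M := he e rfl
    have hfM : f ∈ M := not_not.1 (mt hef.2 heM)
    have ih := countP_notMem_eq halt (List.cons_ne_nil g l)
      (fun g' hg' => Option.some_inj.mp hg' ▸ hfg.1 hfM) (fun e' he' => hl e' (by simpa using he'))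
    simp only [List.countP_cons (a := e), List.countP_cons (a := f), ih]
    simp [heM, hfM]

open Classical in
theorem List.Nodup.ncard_setOf_mem_and {α : Type*} {l : List α} (hl : l.Nodup) (P : α → Prop) :
    {a | a ∈ l ∧ P a}.ncard = l.countP (P ·) := by
  rw [List.countP_eq_length_filter, ← List.toFinset_card_of_nodup (hl.filter _),
    ← Set.ncard_coe_finset]
  congr 1
  ext
  simp

theorem IsMatching'.symmDiff_edges (hM : IsMatching' G M) {x z : V} {p : G.Walk x z}
    (hp : p.IsPath) (halt : AlternatingEdges M p.edges) (hx : ¬MSaturated M x)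
    (hz : ¬MSaturated M z) : IsMatching' G (symmDiff M {e | e ∈ p.edges}) := by
  have mixed : ∀ e ∈ M, e ∉ p.edges → ∀ f ∈ p.edges, ∀ v, v ∈ e → v ∈ f → False := by
    intro e he hep f hf v hve hvf
    obtain ⟨w, rfl⟩ := Sym2.mem_iff_exists.mp hvf
    have hvx : v ≠ x := by rintro rfl; exact hx ⟨e, he, hve⟩
    have hvz : v ≠ z := by rintro rfl; exact hz ⟨e, he, hve⟩
    obtain ⟨g, hg, hgM, hvg⟩ :=
      p.exists_mem_of_mem_support halt (p.fst_mem_support_of_mem_edges hf) hvx hvz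
    exact hep (hM.eq_of_mem hgM he hvg hve ▸ hg)
  refine ⟨fun e he => ?_, fun e he f hf hef v ⟨hve, hvf⟩ => ?_⟩
  · rcases Set.mem_symmDiff.mp he with ⟨he, -⟩ | ⟨he, -⟩
    exacts [hM.1 he, p.edges_subset_edgeSet he]
  rcases Set.mem_symmDiff.mp he with ⟨he, hep⟩ | ⟨hep, he⟩ <;>
    rcases Set.mem_symmDiff.mp hf with ⟨hf, hfp⟩ | ⟨hfp, hf⟩
  · exact hM.2 e he f hf hef v ⟨hve, hvf⟩
  · exact mixed e he hep f hfp v hve hvf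
  · exact mixed f hf hfp e hep v hvf hve
  · exact (hp.mem_or_mem_of_alternatingEdges halt hep hfp hef hve hvf).elim he hf

/-- Berge: the symmetric difference of `M` with an augmenting path would be a larger matching. -/
theorem IsMaxMatching.eq_of_isPath [Finite V] (hM : IsMaxMatching G M) {x z : V}
    {p : G.Walk x z} (hp : p.IsPath) (halt : AlternatingEdges M p.edges)
    (hx : ¬MSaturated M x) (hz : ¬MSaturated M z) : x = z := by
  by_contra hxz
  set L : Set (Sym2 V) := {e | e ∈ p.edges}
  have hne : p.edges ≠ [] := fun h => hxz (Walk.edges_eq_nil.mp h).eq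
  have hcount : (L \ M).ncard = (M ∩ L).ncard + 1 := by
    have hnd := hp.edges_nodup
    have h := halt.countP_notMem_eq hne
      (fun e he heM => hx ⟨e, heM, p.mem_of_mem_head?_edges he⟩)
      (fun e he heM => hz ⟨e, heM, p.mem_of_mem_getLast?_edges he⟩)
    rw [Set.inter_comm, show L ∩ M = {e | e ∈ p.edges ∧ e ∈ M} from rfl,
      show L \ M = {e | e ∈ p.edges ∧ e ∉ M} from rfl, hnd.ncard_setOf_mem_and,
      hnd.ncard_setOf_mem_and]
    convert h
  have hcard : (symmDiff M L).ncard = M.ncard + 1 := by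
    rw [Set.symmDiff_def, Set.ncard_union_eq disjoint_sdiff_sdiff, hcount,
      ← Set.ncard_inter_add_ncard_sdiff_eq_ncard M L]
    omega
  have := hM.2 (symmDiff M L) (hM.1.symmDiff_edges hp halt hx hz)
  omega

def IsAltPathFrom (M : Set (Sym2 V)) (A : Set V) {a z : V} (q : G.Walk a z) : Prop :=
  a ∈ A ∧ ¬MSaturated M a ∧ q.IsPath ∧ AlternatingEdges M q.edges

namespace IsAltPathFrom

variable {a u : V} {q : G.Walk a u}

theorem onAltPath (hq : IsAltPathFrom M A q) {e : Sym2 V} (he : e ∈ q.edges) :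
    OnAltPath G M A e :=
  ⟨a, u, q, hq.1, hq.2.1, hq.2.2.1, hq.2.2.2, he⟩

theorem concat (hq : IsAltPathFrom M A q) {v : V} (huv : G.Adj u v) (hv : v ∉ q.support)
    (hjoin : ∀ e ∈ q.edges.getLast?, e ∈ M ↔ s(u, v) ∉ M) :
    IsAltPathFrom M A (q.concat huv) := by
  refine ⟨hq.1, hq.2.1, hq.2.2.1.concat hv huv, ?_⟩
  rw [AlternatingEdges, Walk.edges_concat, List.concat_eq_append]
  exact hq.2.2.2.append (List.isChain_singleton _)
    fun e he f hf => Option.some_inj.mp hf ▸ hjoin e he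

theorem notMem_of_getLast? (hq : IsAltPathFrom M A q) {S : Set V}
    (hS : _root_.IsVertexCover G S) (hSM : ∀ ⦃u v : V⦄, G.Adj u v → s(u, v) ∈ M → u ∈ S → v ∉ S)
    (ha : a ∉ S) {e : Sym2 V} (hlast : q.edges.getLast? = some e) (he : e ∈ M) : u ∉ S :=
  fun hu => (q.mem_iff_of_alternatingEdges hS hSM hq.2.2.2
    (fun f hf => iff_of_false ha fun hfM => hq.2.1 ⟨f, hfM, q.mem_of_mem_head?_edges hf⟩)
    e hlast).1 hu he

end IsAltPathFrom

theorem OnAltPath.exists_isAltPathFrom (hbip : IsBipartition G A B) (hM : IsMatching' G M)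
    {e : Sym2 V} (he : e ∈ M) (h : OnAltPath G M A e) {u : V} (hue : u ∈ e) (hu : u ∈ A) :
    ∃ (a : V) (q : G.Walk a u), IsAltPathFrom M A q ∧ q.edges.getLast? = some e := by
  obtain ⟨a, z, p, ha, hau, hp, halt, hep⟩ := h
  obtain ⟨u', q, r, rfl, hlast⟩ := p.exists_append_eq_of_mem_edges hep
  have hq : IsAltPathFrom M A q :=
    ⟨ha, hau, hp.of_append_left, by
      rw [AlternatingEdges, Walk.edges_append] at halt
      exact halt.left_of_append⟩
  have hu'B : u' ∉ B := hq.notMem_of_getLast? hbip.isVertexCover_right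
    (fun _ _ hxy _ hx => (hbip.mem_right_iff_of_adj hxy).1 hx) (hbip.mem_left_iff.1 ha) hlast he
  obtain ⟨w, rfl⟩ := Sym2.mem_iff_exists.mp (q.mem_of_mem_getLast?_edges hlast)
  rcases Sym2.mem_iff.mp hue with rfl | rfl
  · exact ⟨a, q, hq, hlast⟩
  · exact absurd ((hbip.isVertexCover_right (hM.1 he)).resolve_left hu'B) (hbip.mem_left_iff.1 hu)

theorem IsMaxMatching.exists_onAltPath_of_adj [Finite V] (hM : IsMaxMatching G M) {a u v : V}
    {q : G.Walk a u} (hq : IsAltPathFrom M A q) (hlast : ∀ e ∈ q.edges.getLast?, e ∈ M)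
    (huv : G.Adj u v) (huvM : s(u, v) ∉ M) (hva : v ≠ a) :
    ∃ f ∈ M, v ∈ f ∧ OnAltPath G M A f := by
  by_cases hvq : ∃ f ∈ q.edges, f ∈ M ∧ v ∈ f
  · obtain ⟨f, hfq, hf, hvf⟩ := hvq
    exact ⟨f, hf, hvf, hq.onAltPath hfq⟩
  have hvq' : v ∉ q.support := fun hv =>
    hvq (q.exists_mem_of_mem_support hq.2.2.2 hv hva huv.ne')
  have hq' : IsAltPathFrom M A (q.concat huv) :=
    hq.concat huv hvq' fun e he => iff_of_true (hlast e he) huvM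
  by_cases hv : MSaturated M v
  · obtain ⟨f, hf, hvf⟩ := hv
    obtain ⟨w, rfl⟩ := Sym2.mem_iff_exists.mp hvf
    have hvw : G.Adj v w := hM.1.1 hf
    have hwq : w ∉ (q.concat huv).support := by
      rw [Walk.support_concat, List.mem_append, List.mem_singleton, not_or]
      refine ⟨fun hw => ?_, hvw.ne'⟩
      have hwa : w ≠ a := fun hwa => hq.2.1 ⟨_, hf, hwa ▸ Sym2.mem_mk_right v w⟩
      have hwu : w ≠ u := by rintro rfl; exact huvM (Sym2.eq_swap ▸ hf)
      obtain ⟨g, hg, hgM, hwg⟩ := q.exists_mem_of_mem_support hq.2.2.2 hw hwa hwu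
      exact hvq ⟨g, hg, hgM, hM.1.eq_of_mem hf hgM (Sym2.mem_mk_right v w) hwg ▸ hvf⟩
    refine ⟨_, hf, hvf, (hq'.concat hvw hwq fun e he => ?_).onAltPath (by simp)⟩
    rw [Walk.edges_concat, List.concat_eq_append, List.getLast?_concat] at he
    exact Option.some_inj.mp he ▸ iff_of_false huvM (not_not.2 hf)
  · exact absurd (hM.eq_of_isPath hq'.2.2.1 hq'.2.2.2 hq.2.1 hv) hva.symm

theorem mem_koenigCoverFrom_iff (hbip : IsBipartition G A B) (hM : IsMatching' G M)
    {e : Sym2 V} (he : e ∈ M) {v : V} (hve : v ∈ e) :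
    v ∈ koenigCoverFrom G M A B ↔ (v ∈ B ↔ OnAltPath G M A e) := by
  have hv : ∀ f ∈ M, v ∈ f → f = e := fun f hf hvf => hM.eq_of_mem hf he hvf hve
  constructor
  · rintro (⟨hvB, f, hf, hvf, hOP⟩ | ⟨hvA, f, hf, hvf, hOP⟩)
    · exact iff_of_true hvB (hv f hf hvf ▸ hOP)
    · exact iff_of_false (hbip.mem_left_iff.1 hvA) (hv f hf hvf ▸ hOP)
  · intro h
    by_cases hvB : v ∈ B
    · exact Or.inl ⟨hvB, e, he, hve, h.1 hvB⟩
    · exact Or.inr ⟨hbip.mem_left_iff.2 hvB, e, he, hve, mt h.2 hvB⟩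

theorem isTransversal_koenigCoverFrom (hbip : IsBipartition G A B) (hM : IsMatching' G M) :
    IsTransversal M (koenigCoverFrom G M A B) := by
  refine ⟨?_, fun u v he => ?_⟩
  · rintro v (⟨-, e, he, hve, -⟩ | ⟨-, e, he, hve, -⟩) <;> exact ⟨e, he, hve⟩
  · rw [mem_koenigCoverFrom_iff hbip hM he (Sym2.mem_mk_left u v),
      mem_koenigCoverFrom_iff hbip hM he (Sym2.mem_mk_right u v),
      hbip.mem_right_iff_of_adj (hM.1 he)]
    tauto

theorem koenigCoverFrom_isVertexCover [Finite V] (hbip : IsBipartition G A B)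
    (hM : IsMaxMatching G M) : _root_.IsVertexCover G (koenigCoverFrom G M A B) := by
  suffices h : ∀ ⦃u v⦄, G.Adj u v → u ∈ A → v ∈ B →
      u ∈ koenigCoverFrom G M A B ∨ v ∈ koenigCoverFrom G M A B by
    intro u v huv
    rcases hbip.2.2 huv with ⟨hu, hv⟩ | ⟨hu, hv⟩
    exacts [h huv hu hv, (h huv.symm hv hu).symm]
  intro u v huv hu hv
  have extend : ∀ (a : V) (q : G.Walk a u), IsAltPathFrom M A q →
      (∀ e ∈ q.edges.getLast?, e ∈ M) → s(u, v) ∉ M → v ∈ koenigCoverFrom G M A B := by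
    intro a q hq hlast huvM
    have hva : v ≠ a := fun hva => hbip.mem_left_iff.1 hq.1 (hva ▸ hv)
    obtain ⟨f, hf, hvf, hOP⟩ := hM.exists_onAltPath_of_adj hq hlast huv huvM hva
    exact (mem_koenigCoverFrom_iff hbip hM.1 hf hvf).2 (iff_of_true hv hOP)
  by_cases hus : MSaturated M u
  · obtain ⟨e, he, hue⟩ := hus
    by_cases hOP : OnAltPath G M A e
    · by_cases huvM : s(u, v) ∈ M
      · obtain rfl := hM.1.eq_of_mem huvM he (Sym2.mem_mk_left u v) hue
        exact Or.inr ((mem_koenigCoverFrom_iff hbip hM.1 huvM (Sym2.mem_mk_right u v)).2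
          (iff_of_true hv hOP))
      · obtain ⟨a, q, hq, hlast⟩ := hOP.exists_isAltPathFrom hbip hM.1 he hue hu
        exact Or.inr (extend a q hq (fun f hf => Option.some_inj.mp (hlast ▸ hf) ▸ he) huvM)
    · exact Or.inl ((mem_koenigCoverFrom_iff hbip hM.1 he hue).2
        (iff_of_false (hbip.mem_left_iff.1 hu) hOP))
  · exact Or.inr (extend u .nil ⟨hu, hus, .nil, List.isChain_nil⟩ (by simp)
      fun huvM => hus ⟨_, huvM, Sym2.mem_mk_left u v⟩)

theorem isMinVertexCover_koenigCoverFrom [Finite V] (hbip : IsBipartition G A B)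
    (hM : IsMaxMatching G M) : IsMinVertexCover G (koenigCoverFrom G M A B) :=
  ⟨koenigCoverFrom_isVertexCover hbip hM, fun _ hC =>
    (isTransversal_koenigCoverFrom hbip hM.1).ncard_eq hM.1 ▸ hM.1.ncard_le hC⟩

theorem IsMinVertexCover.isTransversal [Finite V] (hbip : IsBipartition G A B)
    (hM : IsMaxMatching G M) (hC : IsMinVertexCover G C) : IsTransversal M C :=
  hC.1.isTransversal_of_ncard_le hM.1 <| (isTransversal_koenigCoverFrom hbip hM.1).ncard_eq hM.1 ▸
    hC.2 _ (koenigCoverFrom_isVertexCover hbip hM)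

theorem OnAltPath.mem_right_iff_mem [Finite V] (hbip : IsBipartition G A B)
    (hM : IsMaxMatching G M) (hC : IsMinVertexCover G C) {e : Sym2 V} (he : e ∈ M)
    (h : OnAltPath G M A e) {v : V} (hve : v ∈ e) : v ∈ B ↔ v ∈ C := by
  have hT := hC.isTransversal hbip hM
  obtain ⟨x, hxe, hx⟩ := hbip.exists_mem_left (hM.1.1 he)
  obtain ⟨a, q, hq, hlast⟩ := h.exists_isAltPathFrom hbip hM.1 he hxe hx
  have hxC : x ∉ C := hq.notMem_of_getLast? hC.1 (fun _ _ _ he hu => (hT.2 he).1 hu)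
    (fun ha => hq.2.1 (hT.1 _ ha)) hlast he
  obtain ⟨y, rfl⟩ := Sym2.mem_iff_exists.mp hxe
  rcases Sym2.mem_iff.mp hve with rfl | rfl
  · exact iff_of_false (hbip.mem_left_iff.1 hx) hxC
  · exact iff_of_true ((hbip.isVertexCover_right (hM.1.1 he)).resolve_left
      (hbip.mem_left_iff.1 hx)) ((hC.1 (hM.1.1 he)).resolve_left hxC)

theorem IsMinVertexCover.inter_subset_koenigCoverFrom [Finite V] (hbip : IsBipartition G A B)
    (hM : IsMaxMatching G M) (hC : IsMinVertexCover G C) :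
    A ∩ C ⊆ A ∩ koenigCoverFrom G M A B ∧ B ∩ koenigCoverFrom G M A B ⊆ B ∩ C := by
  refine ⟨fun v ⟨hvA, hvC⟩ => ⟨hvA, ?_⟩, fun v ⟨hvB, hvK⟩ => ⟨hvB, ?_⟩⟩
  · obtain ⟨e, he, hve⟩ := (hC.isTransversal hbip hM).1 v hvC
    have hvB := hbip.mem_left_iff.1 hvA
    exact (mem_koenigCoverFrom_iff hbip hM.1 he hve).2
      (iff_of_false hvB fun hOP => hvB ((hOP.mem_right_iff_mem hbip hM hC he hve).2 hvC))
  · obtain ⟨e, he, hve⟩ := (isTransversal_koenigCoverFrom hbip hM.1).1 v hvK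
    have hOP := ((mem_koenigCoverFrom_iff hbip hM.1 he hve).1 hvK).1 hvB
    exact (hOP.mem_right_iff_mem hbip hM hC he hve).1 hvB

end

/-- For a finite bipartite graph `G` with bipartition `(A,B)`, a
maximum matching `M` and a minimum vertex cover `C`, the cover `C` equals the
`A`-König cover of `G` constructed from `M` if and only if every minimum vertex
cover `C'` satisfies `A ∩ C' ⊆ A ∩ C` and `B ∩ C ⊆ B ∩ C'`. -/
theorem koenigCover_eq_iff {V : Type} [Fintype V] (G : SimpleGraph V)
    (A B : Set V) (hbip : IsBipartition G A B)
    (M : Set (Sym2 V)) (hM : IsMaxMatching G M)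
    (C : Set V) (hC : IsMinVertexCover G C) :
    C = koenigCoverFrom G M A B ↔
      ∀ C' : Set V, IsMinVertexCover G C' →
        A ∩ C' ⊆ A ∩ C ∧ B ∩ C ⊆ B ∩ C' := by
  constructor
  · rintro rfl C' hC'
    exact hC'.inter_subset_koenigCoverFrom hbip hM
  · intro hext
    have hKC := hext _ (isMinVertexCover_koenigCoverFrom hbip hM)
    have hCK := hC.inter_subset_koenigCoverFrom hbip hM
    exact hbip.eq_of_inter_eq (hCK.1.antisymm hKC.1) (hKC.2.antisymm hCK.2)
end

section
/- Let G be a finite simple graph with at least one edge and let k be a positive integer. Suppose there exist a tree T in which every vertex has degree at most 3 and, for each vertex u of G, a nontrivial subtree T_u of T, such that (i) if uv ∈ E(G) then T_u and T_v have at least one vertex of T in common, and (ii) every edge of T belongs to at most k of the subtrees T_u. Then mmw(G) ≤ k. -/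
open SimpleGraph

/-- A matching of the bipartite graph `G[A, V∖A]` crossing the cut `(A, V∖A)`:
a set of pairwise vertex-disjoint edges of `G` with one endpoint in `A` and
the other outside `A`. -/
def IsCrossMatching {V : Type} (G : SimpleGraph V) (A : Set V)
    (M : Set (Sym2 V)) : Prop :=
  (∀ e ∈ M, ∃ u v : V, e = s(u, v) ∧ G.Adj u v ∧ u ∈ A ∧ v ∉ A) ∧
    ∀ e ∈ M, ∀ f ∈ M, e ≠ f → ∀ w : V, ¬ (w ∈ e ∧ w ∈ f)

/-- The mm-value of the cut `(A, V∖A)`: the size of a maximum matching of the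
bipartite graph consisting of the edges of `G` crossing the cut. -/
noncomputable def mmValue {V : Type} (G : SimpleGraph V) (A : Set V) : ℕ :=
  sSup {n : ℕ | ∃ M : Set (Sym2 V), IsCrossMatching G A M ∧ M.ncard = n}

/-- A branch decomposition over `V`: a tree `T` in which every vertex has degree
at most `3`, together with a bijection from the leaves of `T` to `V`. -/
structure BranchDecomp (V N : Type) where
  tree : SimpleGraph N
  isTree : tree.IsTree
  deg_le : ∀ x : N, (tree.neighborSet x).ncard ≤ 3
  leafEquiv : {x : N // (tree.neighborSet x).ncard = 1} ≃ V

/-- For an (oriented) edge `ab` of the decomposition tree, the side of the induced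
partition of `V` consisting of the elements whose leaf lies in the component of
`a` after removing the edge `ab`: those leaves whose path to `a` avoids `b`. -/
def BranchDecomp.side {V N : Type} (D : BranchDecomp V N) (a b : N) : Set V :=
  {g : V | ∃ p : D.tree.Walk (D.leafEquiv.symm g : N) a, p.IsPath ∧ b ∉ p.support}

/-- The maximum matching width of `G`: the minimum over all branch decompositions
over `V(G)` of the maximum mm-value of an edge of the decomposition tree
(and `0` if no branch decomposition exists, i.e. if `|V(G)| ≤ 1`). -/
noncomputable def mmw {V : Type} (G : SimpleGraph V) : ℕ :=
  sInf {k : ℕ | ∃ (N : Type) (_ : Fintype N) (D : BranchDecomp V N),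
    ∀ a b : N, D.tree.Adj a b → mmValue G (D.side a b) ≤ k}

/-- A subtree of a tree `T`: a nonempty set of vertices that is connected in `T`. -/
def IsSubtree {N : Type} (T : SimpleGraph N) (S : Set N) : Prop :=
  S.Nonempty ∧ ∀ a ∈ S, ∀ b ∈ S,
    ∃ p : T.Walk a b, p.IsPath ∧ ∀ c ∈ p.support, c ∈ S

/-- A nontrivial subtree: a subtree containing at least one edge of `T`. -/
def IsNontrivialSubtree {N : Type} (T : SimpleGraph N) (S : Set N) : Prop :=
  IsSubtree T S ∧ ∃ a ∈ S, ∃ b ∈ S, T.Adj a b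

/-- A tree decomposition of `G`. -/
structure TreeDecomp (V N : Type) (G : SimpleGraph V) where
  tree : SimpleGraph N
  isTree : tree.IsTree
  bag : N → Set V
  mem_bag : ∀ v : V, ∃ t : N, v ∈ bag t
  edge_bag : ∀ ⦃u v : V⦄, G.Adj u v → ∃ t : N, u ∈ bag t ∧ v ∈ bag t
  path_bag : ∀ (t₁ t₂ t₃ : N) (p : tree.Walk t₁ t₃), p.IsPath → t₂ ∈ p.support →
    bag t₁ ∩ bag t₃ ⊆ bag t₂

/-- The treewidth of `G`: the minimum over all tree decompositions of `G` of the
maximum bag size minus one. -/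
noncomputable def tw {V : Type} (G : SimpleGraph V) : ℕ :=
  sInf {w : ℕ | ∃ (N : Type) (_ : Fintype N) (D : TreeDecomp V N G),
    ∀ t : N, (D.bag t).ncard ≤ w + 1}

/-- A graph is chordal if every cycle of length at least 4 has a chord, i.e. an
edge of the graph joining two vertices of the cycle that is not an edge of the
cycle. -/
def IsChordal {V : Type} (H : SimpleGraph V) : Prop :=
  ∀ (v : V) (c : H.Walk v v), c.IsCycle → 4 ≤ c.length →
    ∃ u w : V, u ∈ c.support ∧ w ∈ c.support ∧ H.Adj u w ∧ s(u, w) ∉ c.edges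

/-- A maximal clique of `H`: a clique not properly contained in any other clique. -/
def IsMaximalClique {V : Type} (H : SimpleGraph V) (X : Set V) : Prop :=
  H.IsClique X ∧ ∀ Y : Set V, H.IsClique Y → X ⊆ Y → Y = X

/-- `S` separates `u` from `v` in `H`: every walk from `u` to `v` meets `S`. -/
def Separates {V : Type} (H : SimpleGraph V) (S : Set V) (u v : V) : Prop :=
  ∀ p : H.Walk u v, ∃ w ∈ p.support, w ∈ S

/-- `S` is a minimal separator of `H`: there are vertices `u, v ∉ S` such that
removing `S` disconnects `u` from `v` and no proper subset of `S` does so. -/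
def IsMinimalSeparator {V : Type} (H : SimpleGraph V) (S : Set V) : Prop :=
  ∃ u v : V, u ∉ S ∧ v ∉ S ∧ Separates H S u v ∧
    ∀ S' : Set V, S' ⊂ S → ¬ Separates H S' u v


/-!
Root `T` at a leaf `m`, let `q` be its parent map, and attach every vertex `u` of `G` to an edge
`σ u — q (σ u)` of `T_u`. Going up `T`, the vertices attached below a node `b` are obtained by
joining those attached below its at most two children and then adding those attached at `b` one
at a time. This builds a rooted binary tree with leaf set `V(G)`, hence a branch decomposition,
each of whose clusters `X` satisfies `B ⊆ X ⊆ B ∪ C` for some `b ≠ m`, where `B` is the set of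
vertices attached strictly below `b` and `C` the set of `u` with `b, q b ∈ T_u`. Any edge of `G`
leaving such an `X` has an end in `C`: the subtrees of its ends meet, and a subtree with vertices
on both sides of the edge `b — q b` contains it. So `C`, of size at most `k`, covers the edges
across the cut and bounds every matching across it.
-/

section

variable {X : Type*}

def descendants (q : X → X) (b : X) : Set X := {x | ∃ n, q^[n] x = b}

def children (q : X → X) (b : X) : Set X := {c | q c = b ∧ c ≠ b}

variable {q : X → X} {r b c c' x : X}

theorem mem_descendants_self (q : X → X) (b : X) : b ∈ descendants q b := ⟨0, rfl⟩

theorem mem_descendants_of_map_mem (h : q x ∈ descendants q b) : x ∈ descendants q b :=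
  let ⟨n, hn⟩ := h; ⟨n + 1, hn⟩

theorem map_mem_descendants (h : x ∈ descendants q b) (hxb : x ≠ b) : q x ∈ descendants q b := by
  obtain ⟨_ | n, hn⟩ := h
  · exact absurd hn hxb
  · exact ⟨n, hn⟩

theorem descendants_subset_of_map_eq (hc : q c = b) : descendants q c ⊆ descendants q b :=
  fun _ ⟨n, hn⟩ => ⟨1 + n, by rw [Function.iterate_add_apply, hn, Function.iterate_one, hc]⟩

theorem exists_mem_children_of_mem_descendants (h : x ∈ descendants q b) (hxb : x ≠ b) :
    ∃ c ∈ children q b, x ∈ descendants q c := by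
  classical
  have hN : Nat.find h ≠ 0 := fun h0 => hxb (by simpa [h0] using Nat.find_spec h)
  obtain ⟨n, hn⟩ := Nat.exists_eq_succ_of_ne_zero hN
  refine ⟨q^[n] x, ⟨?_, fun hc => Nat.find_min h (by omega) hc⟩, n, rfl⟩
  rw [← Function.iterate_succ_apply' q n x, ← hn]
  exact Nat.find_spec h

theorem mem_descendants_or_mem_descendants (hc : x ∈ descendants q c) (hc' : x ∈ descendants q c') :
    c' ∈ descendants q c ∨ c ∈ descendants q c' := by
  obtain ⟨n, rfl⟩ := hc
  obtain ⟨m, rfl⟩ := hc'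
  rcases le_total n m with h | h
  · exact Or.inr ⟨m - n, by rw [← Function.iterate_add_apply, Nat.sub_add_cancel h]⟩
  · exact Or.inl ⟨n - m, by rw [← Function.iterate_add_apply, Nat.sub_add_cancel h]⟩

structure IsRootedAt (q : X → X) (r : X) : Prop where
  map_root : q r = r
  exists_iterate_eq_root : ∀ x, ∃ n, q^[n] x = r

namespace IsRootedAt

variable (hq : IsRootedAt q r)
include hq

theorem eq_root_of_iterate_eq_self {n : ℕ} (h : q^[n + 1] x = x) : x = r := by
  obtain ⟨m, hm⟩ := hq.exists_iterate_eq_root x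
  have hper : ∀ j, q^[(n + 1) * j] x = x := fun j => by
    induction j with
    | zero => rfl
    | succ j ih => rw [Nat.mul_succ, Function.iterate_add_apply, h, ih]
  have hle : m ≤ (n + 1) * m := Nat.le_mul_of_pos_left m n.succ_pos
  rw [← hper m, ← Nat.sub_add_cancel hle, Function.iterate_add_apply, hm,
    Function.iterate_fixed hq.map_root]

theorem map_ne_self (hx : x ≠ r) : q x ≠ x :=
  fun h => hx (hq.eq_root_of_iterate_eq_self (n := 0) h)

theorem map_notMem_descendants (hb : b ≠ r) : q b ∉ descendants q b :=
  fun ⟨n, hn⟩ => hb (hq.eq_root_of_iterate_eq_self (n := n) hn)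

theorem ne_root_of_mem_children (hc : c ∈ children q b) : c ≠ r := by
  rintro rfl
  exact hc.2 (hq.map_root ▸ hc.1)

theorem descendants_ssubset_of_mem_children (hc : c ∈ children q b) :
    descendants q c ⊂ descendants q b :=
  Set.ssubset_iff_subset_ne.mpr ⟨descendants_subset_of_map_eq hc.1, fun h =>
    hq.map_notMem_descendants (hq.ne_root_of_mem_children hc)
      (h ▸ hc.1 ▸ mem_descendants_self q (q c))⟩

theorem descendants_diff_singleton (b : X) :
    descendants q b \ {b} = ⋃ c ∈ children q b, descendants q c := by
  ext x
  simp only [Set.mem_sdiff, Set.mem_singleton_iff, Set.mem_iUnion₂, exists_prop]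
  refine ⟨fun ⟨hx, hxb⟩ => exists_mem_children_of_mem_descendants hx hxb, ?_⟩
  rintro ⟨c, hc, hx⟩
  refine ⟨descendants_subset_of_map_eq hc.1 hx, ?_⟩
  rintro rfl
  exact hq.map_notMem_descendants (hq.ne_root_of_mem_children hc) (hc.1.symm ▸ hx)

theorem eq_of_mem_descendants_of_mem_children (hc : c ∈ children q b) (hc' : q c' = b)
    (h : c' ∈ descendants q c) : c' = c := by
  obtain ⟨_ | n, hn⟩ := h
  · exact hn
  · rw [Function.iterate_succ_apply, hc'] at hn
    have hb : b = r := hq.eq_root_of_iterate_eq_self (n := n) (by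
      rw [Function.iterate_succ_apply', hn, hc.1])
    subst hb
    exact absurd (by rw [← hn, Function.iterate_fixed hq.map_root]) hc.2

theorem pairwiseDisjoint_descendants_children (b : X) :
    (children q b).PairwiseDisjoint (descendants q) :=
  fun _ hc _ hc' hne => Set.disjoint_left.mpr fun _ hx hx' =>
    (mem_descendants_or_mem_descendants hx hx').elim
      (fun h => hne (hq.eq_of_mem_descendants_of_mem_children hc hc'.1 h).symm)
      (fun h => hne (hq.eq_of_mem_descendants_of_mem_children hc' hc.1 h))

end IsRootedAt

end

section

variable {X : Type*} {H : SimpleGraph X} {q : X → X} {r b x y : X}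

structure IsParentMap (H : SimpleGraph X) (q : X → X) (r : X) : Prop extends IsRootedAt q r where
  adj_iff : ∀ x y, H.Adj x y ↔ x ≠ y ∧ (q x = y ∨ q y = x)

namespace IsParentMap

variable (hq : IsParentMap H q r)
include hq

theorem adj_map (hx : x ≠ r) : H.Adj x (q x) :=
  (hq.adj_iff x (q x)).mpr ⟨(hq.map_ne_self hx).symm, Or.inl rfl⟩

theorem exists_walk_iterate (n : ℕ) (x : X) :
    ∃ w : H.Walk x (q^[n] x), ∀ y ∈ w.support, ∃ i ≤ n, q^[i] x = y := by
  induction n generalizing x with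
  | zero => exact ⟨Walk.nil, by simp⟩
  | succ n ih =>
    obtain ⟨w, hw⟩ := ih (q x)
    by_cases hx : x = r
    · subst hx
      refine ⟨Walk.nil.copy rfl (Function.iterate_fixed hq.map_root _).symm, ?_⟩
      simp only [Walk.support_copy, Walk.support_nil, List.mem_singleton, forall_eq]
      exact ⟨0, n.succ.zero_le, rfl⟩
    · refine ⟨(Walk.cons (hq.adj_map hx) w).copy rfl (Function.iterate_succ_apply q n x).symm, ?_⟩
      simp only [Walk.support_copy, Walk.support_cons, List.mem_cons, forall_eq_or_imp]
      refine ⟨⟨0, n.succ.zero_le, rfl⟩, fun y hy => ?_⟩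
      obtain ⟨i, hi, rfl⟩ := hw y hy
      exact ⟨i + 1, by omega, rfl⟩

theorem exists_walk_to_root (x : X) :
    ∃ w : H.Walk x r, ∀ y ∈ w.support, x ∈ descendants q y := by
  obtain ⟨n, hn⟩ := hq.exists_iterate_eq_root x
  obtain ⟨w, hw⟩ := hq.exists_walk_iterate n x
  exact ⟨w.copy rfl hn, fun y hy => by
    obtain ⟨i, -, rfl⟩ := hw y (by simpa using hy)
    exact ⟨i, rfl⟩⟩

theorem exists_walk_of_mem_descendants (hx : x ∈ descendants q b) :
    ∃ w : H.Walk x b, ∀ y ∈ w.support, y ∈ descendants q b := by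
  obtain ⟨n, hn⟩ := hx
  obtain ⟨w, hw⟩ := hq.exists_walk_iterate n x
  refine ⟨w.copy rfl hn, fun y hy => ?_⟩
  obtain ⟨i, hi, rfl⟩ := hw y (by simpa using hy)
  exact ⟨n - i, by rw [← Function.iterate_add_apply, Nat.sub_add_cancel hi, hn]⟩

theorem connected [Nonempty X] : H.Connected := by
  refine (connected_iff_exists_forall_reachable H).mpr ⟨r, fun x => ?_⟩
  obtain ⟨w, -⟩ := hq.exists_walk_to_root x
  exact w.reachable.symm

theorem edge_mem_edges_of_mem_descendants (w : H.Walk x y) (hx : x ∈ descendants q b)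
    (hy : y ∉ descendants q b) : s(b, q b) ∈ w.edges := by
  induction w with
  | nil => exact absurd hx hy
  | @cons u v z huv p ih =>
    rw [Walk.edges_cons, List.mem_cons]
    by_cases hv : v ∈ descendants q b
    · exact Or.inr (ih hv hy)
    · obtain ⟨-, hqu | hqv⟩ := (hq.adj_iff u v).mp huv
      · by_cases hub : u = b
        · exact Or.inl (by rw [← hqu, hub])
        · exact absurd (hqu ▸ map_mem_descendants hx hub) hv
      · exact absurd (mem_descendants_of_map_mem (hqv ▸ hx)) hv

theorem mem_support_of_mem_descendants (w : H.Walk x y) (hx : x ∈ descendants q b)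
    (hy : y ∉ descendants q b) : b ∈ w.support ∧ q b ∈ w.support :=
  have he := hq.edge_mem_edges_of_mem_descendants w hx hy
  ⟨w.fst_mem_support_of_mem_edges he, w.snd_mem_support_of_mem_edges he⟩

theorem isAcyclic : H.IsAcyclic := by
  refine isAcyclic_iff_forall_adj_isBridge.mpr fun v w hvw => ?_
  rw [isBridge_iff_forall_walk_mem_edges]
  intro p
  obtain ⟨hne, hqv | hqw⟩ := (hq.adj_iff v w).mp hvw
  · subst hqv
    exact hq.edge_mem_edges_of_mem_descendants p (mem_descendants_self q v)
      (hq.map_notMem_descendants (hq.ne_root_of_mem_children ⟨rfl, hne⟩))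
  · subst hqw
    have h := hq.edge_mem_edges_of_mem_descendants p.reverse (mem_descendants_self q w)
      (hq.map_notMem_descendants (hq.ne_root_of_mem_children ⟨rfl, hne.symm⟩))
    rwa [Walk.edges_reverse, List.mem_reverse, Sym2.eq_swap] at h

theorem isTree [Nonempty X] : H.IsTree := ⟨hq.connected, hq.isAcyclic⟩

theorem exists_isPath_map_notMem_support_iff (hb : b ≠ r) :
    (∃ p : H.Walk x b, p.IsPath ∧ q b ∉ p.support) ↔ x ∈ descendants q b := by
  classical
  constructor
  · rintro ⟨p, -, hp⟩
    by_contra hx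
    have h := (hq.mem_support_of_mem_descendants p.reverse (mem_descendants_self q b) hx).2
    exact hp (by simpa using h)
  · intro hx
    obtain ⟨w, hw⟩ := hq.exists_walk_of_mem_descendants hx
    exact ⟨w.bypass, w.bypass_isPath, fun h =>
      hq.map_notMem_descendants hb (hw _ (w.support_bypass_subset_support h))⟩

theorem exists_isPath_to_map_notMem_support_iff (hb : b ≠ r) :
    (∃ p : H.Walk x (q b), p.IsPath ∧ b ∉ p.support) ↔ x ∉ descendants q b := by
  classical
  constructor
  · rintro ⟨p, -, hp⟩ hx
    exact hp (hq.mem_support_of_mem_descendants p hx (hq.map_notMem_descendants hb)).1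
  · intro hx
    obtain ⟨w₁, hw₁⟩ := hq.exists_walk_to_root x
    obtain ⟨w₂, hw₂⟩ := hq.exists_walk_to_root (q b)
    let w := w₁.append w₂.reverse
    have hw : b ∉ w.support := by
      simp only [w, Walk.mem_support_append_iff, Walk.support_reverse, List.mem_reverse]
      rintro (h | h)
      · exact hx (hw₁ b h)
      · exact hq.map_notMem_descendants hb (hw₂ b h)
    exact ⟨w.bypass, w.bypass_isPath, fun h => hw (w.support_bypass_subset_support h)⟩

theorem ncard_children_add_one_le [Finite X] (hb : b ≠ r) :
    (children q b).ncard + 1 ≤ (H.neighborSet b).ncard := by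
  have hqb : q b ∉ children q b := fun h =>
    hb (hq.eq_root_of_iterate_eq_self (n := 1) h.1)
  rw [← Set.ncard_insert_of_notMem hqb]
  refine Set.ncard_le_ncard (Set.insert_subset_iff.mpr ⟨hq.adj_map hb, fun c hc => ?_⟩)
  exact (hq.adj_iff b c).mpr ⟨hc.2.symm, Or.inr hc.1⟩

theorem mem_descendants_of_forall_adj_eq (huniq : ∀ y, H.Adj r y → y = c)
    (hx : x ≠ r) : x ∈ descendants q c := by
  obtain ⟨c', hc', hx⟩ := exists_mem_children_of_mem_descendants
    (hq.exists_iterate_eq_root x) hx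
  rwa [huniq c' ((hq.adj_iff r c').mpr ⟨hc'.2.symm, Or.inr hc'.1⟩)] at hx

theorem exists_mem_ne_root_map_mem {S : Set X} (hS : ∃ a ∈ S, ∃ b ∈ S, H.Adj a b) :
    ∃ x ∈ S, x ≠ r ∧ q x ∈ S := by
  obtain ⟨a, ha, b, hb, hab⟩ := hS
  obtain ⟨hne, rfl | rfl⟩ := (hq.adj_iff a b).mp hab
  · exact ⟨a, ha, hq.ne_root_of_mem_children ⟨rfl, hne⟩, hb⟩
  · exact ⟨b, hb, hq.ne_root_of_mem_children ⟨rfl, hne.symm⟩, ha⟩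

end IsParentMap

end

theorem SimpleGraph.IsTree.exists_isParentMap {X : Type*} {T : SimpleGraph X} (hT : T.IsTree)
    (r : X) : ∃ q, IsParentMap T q r := by
  choose p hp hpu using fun x => hT.existsUnique_path x r
  have hpr : p r = Walk.nil := (hpu r Walk.nil Walk.IsPath.nil).symm
  have hnil {x : X} (hx : x ≠ r) : ¬ (p x).Nil := Walk.not_nil_of_ne hx
  have hroot : (fun x => (p x).snd) r = r := by simp [hpr]
  have hne {x : X} (h : (p x).snd ≠ x) : x ≠ r := by
    rintro rfl
    exact h hroot
  refine ⟨fun x => (p x).snd, ⟨hroot, fun x => ?_⟩, fun x y => ⟨fun hxy => ⟨hxy.ne, ?_⟩, ?_⟩⟩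
  · induction hn : (p x).length using Nat.strong_induction_on generalizing x with
    | _ n ih =>
      by_cases hx : x = r
      · exact ⟨0, hx⟩
      · have htail : (p x).tail = p (p x).snd := hpu _ _ (hp x).tail
        have hlen := Walk.length_tail_add_one (hnil hx)
        rw [htail] at hlen
        obtain ⟨m, hm⟩ := ih _ (by omega) (p x).snd rfl
        exact ⟨m + 1, hm⟩
  · by_cases hy : y ∈ (p x).support
    · exact Or.inl (hT.isAcyclic.eq_snd_of_adj_start (hp x) hxy hy).symm
    · have hcons : Walk.cons hxy.symm (p x) = p y :=
        hpu y _ ((Walk.cons_isPath_iff _ _).mpr ⟨hp x, hy⟩)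
      exact Or.inr (by simp [← hcons])
  · rintro ⟨hxy, rfl | rfl⟩
    · exact Walk.adj_snd (hnil (hne hxy.symm))
    · exact (Walk.adj_snd (hnil (hne hxy))).symm

section

variable {V : Type} {G : SimpleGraph V} {A : Set V} {k : ℕ}

theorem isCrossMatching_compl {M : Set (Sym2 V)} :
    IsCrossMatching G Aᶜ M ↔ IsCrossMatching G A M := by
  refine and_congr_left fun _ => forall₂_congr fun e _ => ⟨?_, ?_⟩ <;>
    rintro ⟨u, v, rfl, huv, hu, hv⟩ <;>
    exact ⟨v, u, Sym2.eq_swap, huv.symm, by simpa using hv, by simpa using hu⟩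

theorem mmValue_compl : mmValue G Aᶜ = mmValue G A := by
  simp only [mmValue, isCrossMatching_compl]

theorem mmValue_le_of_cut_cover [Finite V] (C : Set V) (hC : C.ncard ≤ k)
    (hcover : ∀ u v, G.Adj u v → u ∈ A → v ∉ A → u ∈ C ∨ v ∈ C) : mmValue G A ≤ k := by
  refine csSup_le' ?_
  rintro _ ⟨M, ⟨hM, hdisj⟩, rfl⟩
  rcases M.eq_empty_or_nonempty with rfl | ⟨e₀, he₀⟩
  · simp
  have : Nonempty V := ⟨e₀.out.1⟩
  have hend : ∀ e ∈ M, ∃ x ∈ C, x ∈ e := by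
    intro e he
    obtain ⟨u, v, rfl, huv, hu, hv⟩ := hM e he
    rcases hcover u v huv hu hv with h | h
    · exact ⟨u, h, Sym2.mem_mk_left u v⟩
    · exact ⟨v, h, Sym2.mem_mk_right u v⟩
  choose! f hfC hfe using hend
  refine (Set.ncard_le_ncard_of_injOn f hfC (fun e he e' he' hee => ?_)).trans hC
  by_contra hne
  exact hdisj e he e' he' hne (f e) ⟨hfe e he, hee ▸ hfe e' he'⟩

theorem mmValue_singleton_le_one [Finite V] (p : V) : mmValue G {p} ≤ 1 :=
  mmValue_le_of_cut_cover {p} (Set.ncard_singleton p).le fun _ _ _ hu _ => Or.inl hu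

end

theorem BranchDecomp.mmValue_side_le {V N : Type} {D : BranchDecomp V N} {q : N → N} {r : N}
    (hq : IsParentMap D.tree q r) {G : SimpleGraph V} {k : ℕ}
    (hk : ∀ y, mmValue G {g | (D.leafEquiv.symm g : N) ∈ descendants q y} ≤ k)
    {a b : N} (hab : D.tree.Adj a b) : mmValue G (D.side a b) ≤ k := by
  obtain ⟨hne, rfl | rfl⟩ := (hq.adj_iff a b).mp hab
  · have hside : D.side a (q a) = {g | (D.leafEquiv.symm g : N) ∈ descendants q a} :=
      Set.ext fun _ =>
        hq.exists_isPath_map_notMem_support_iff (hq.ne_root_of_mem_children ⟨rfl, hne⟩)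
    exact hside ▸ hk a
  · have hside : D.side (q b) b = {g | (D.leafEquiv.symm g : N) ∈ descendants q b}ᶜ :=
      Set.ext fun _ =>
        hq.exists_isPath_to_map_notMem_support_iff (hq.ne_root_of_mem_children ⟨rfl, hne.symm⟩)
    exact hside ▸ mmValue_compl.trans_le (hk b)


inductive BinTree (V : Type) where
  | leaf (v : V)
  | node (l r : BinTree V)

namespace BinTree

variable {V : Type}

def subtree : BinTree V → List Bool → Option (BinTree V)
  | t, [] => some t
  | leaf _, _ :: _ => none
  | node l _, false :: x => l.subtree x
  | node _ r, true :: x => r.subtree x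

@[simp]
theorem subtree_nil (t : BinTree V) : t.subtree [] = some t := by
  cases t <;> rfl

def labels : BinTree V → Set V
  | leaf v => {v}
  | node l r => l.labels ∪ r.labels

def Nodup : BinTree V → Prop
  | leaf _ => True
  | node l r => l.Nodup ∧ r.Nodup ∧ Disjoint l.labels r.labels

def height : BinTree V → ℕ
  | leaf _ => 0
  | node l r => max l.height r.height + 1

theorem subtree_append (t : BinTree V) (x y : List Bool) :
    t.subtree (x ++ y) = (t.subtree x).bind (·.subtree y) := by
  induction t generalizing x with
  | leaf v => cases x <;> rfl
  | node l r ihl ihr =>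
    rcases x with _ | ⟨_ | _, x⟩
    · rfl
    · exact ihl x
    · exact ihr x

theorem isSome_subtree_of_prefix {t : BinTree V} {x y : List Bool} (hy : (t.subtree y).isSome)
    (hxy : x <+: y) : (t.subtree x).isSome := by
  obtain ⟨z, rfl⟩ := hxy
  rw [subtree_append] at hy
  cases h : t.subtree x <;> simp_all

theorem length_le_height {t : BinTree V} {x : List Bool} (hx : (t.subtree x).isSome) :
    x.length ≤ t.height := by
  induction t generalizing x with
  | leaf v => cases x <;> simp_all [subtree, height]
  | node l r ihl ihr =>
    rcases x with _ | ⟨_ | _, x⟩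
    · exact Nat.zero_le _
    · have := ihl hx
      simp only [List.length_cons, height]
      omega
    · have := ihr hx
      simp only [List.length_cons, height]
      omega

theorem mem_labels_iff {t : BinTree V} {v : V} :
    v ∈ t.labels ↔ ∃ x, t.subtree x = some (leaf v) := by
  induction t with
  | leaf w =>
    refine ⟨fun h => ⟨[], by rw [h]; rfl⟩, fun ⟨x, hx⟩ => ?_⟩
    cases x <;> simp_all [subtree, labels]
  | node l r ihl ihr =>
    simp only [labels, Set.mem_union, ihl, ihr]
    refine ⟨?_, fun ⟨x, hx⟩ => ?_⟩
    · rintro (⟨x, hx⟩ | ⟨x, hx⟩)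
      exacts [⟨false :: x, hx⟩, ⟨true :: x, hx⟩]
    · rcases x with _ | ⟨_ | _, x⟩
      · simp [subtree] at hx
      · exact Or.inl ⟨x, hx⟩
      · exact Or.inr ⟨x, hx⟩

theorem Nodup.eq_of_subtree_eq_leaf {t : BinTree V} (ht : t.Nodup) {x y : List Bool} {v : V}
    (hx : t.subtree x = some (leaf v)) (hy : t.subtree y = some (leaf v)) : x = y := by
  induction t generalizing x y with
  | leaf w => cases x <;> cases y <;> simp_all [subtree]
  | node l r ihl ihr =>
    obtain ⟨hl, hr, hdisj⟩ := ht
    have hboth : ∀ x' y', l.subtree x' = some (leaf v) → r.subtree y' = some (leaf v) → False :=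
      fun x' y' hx' hy' => Set.disjoint_left.mp hdisj (mem_labels_iff.mpr ⟨x', hx'⟩)
        (mem_labels_iff.mpr ⟨y', hy'⟩)
    rcases x with _ | ⟨_ | _, x⟩ <;> rcases y with _ | ⟨_ | _, y⟩ <;>
      simp only [subtree, Option.some.injEq, reduceCtorEq] at hx hy
    · rw [ihl hl hx hy]
    · exact (hboth x y hx hy).elim
    · exact (hboth y x hy hx).elim
    · rw [ihr hr hx hy]

theorem prefix_iff_mem_labels {t s : BinTree V} (ht : t.Nodup) {x y : List Bool} {v : V}
    (hx : t.subtree x = some (leaf v)) (hy : t.subtree y = some s) : y <+: x ↔ v ∈ s.labels := by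
  rw [mem_labels_iff]
  refine ⟨fun ⟨z, hz⟩ => ⟨z, ?_⟩, fun ⟨z, hz⟩ => ⟨z, ?_⟩⟩
  · rwa [← hz, subtree_append, hy, Option.bind_some] at hx
  · refine ht.eq_of_subtree_eq_leaf ?_ hx
    rwa [subtree_append, hy, Option.bind_some]

abbrev Pos (t : BinTree V) : Type := {x : List Bool // (t.subtree x).isSome}

instance (t : BinTree V) : Finite t.Pos :=
  ((List.finite_length_le Bool t.height).subset fun _ => length_le_height).to_subtype

def posGraph (t : BinTree V) : SimpleGraph t.Pos where
  Adj x y := x ≠ y ∧ (x.1.dropLast = y.1 ∨ y.1.dropLast = x.1)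
  symm := ⟨fun _ _ h => ⟨h.1.symm, h.2.symm⟩⟩
  loopless := ⟨fun _ h => h.1 rfl⟩

def root (t : BinTree V) : t.Pos := ⟨[], by simp⟩

def parent {t : BinTree V} (x : t.Pos) : t.Pos :=
  ⟨x.1.dropLast, isSome_subtree_of_prefix x.2 x.1.dropLast_prefix⟩

theorem val_iterate_parent {t : BinTree V} (x : t.Pos) (n : ℕ) :
    (parent^[n] x).1 = x.1.take (x.1.length - n) := by
  induction n with
  | zero => simp
  | succ n ih =>
    rw [Function.iterate_succ_apply']
    change (parent^[n] x).1.dropLast = _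
    rw [ih]
    simp only [List.dropLast_eq_take, List.take_take, List.length_take]
    congr 1
    omega

theorem isParentMap_parent (t : BinTree V) : IsParentMap t.posGraph parent t.root where
  map_root := rfl
  exists_iterate_eq_root x := ⟨x.1.length, Subtype.ext (by simp [val_iterate_parent, root])⟩
  adj_iff x y := by simp [posGraph, parent, Subtype.ext_iff]

theorem mem_descendants_parent_iff {t : BinTree V} {x y : t.Pos} :
    x ∈ descendants parent y ↔ y.1 <+: x.1 := by
  refine ⟨fun ⟨n, hn⟩ => ?_, fun h => ⟨x.1.length - y.1.length, Subtype.ext ?_⟩⟩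
  · rw [← hn, val_iterate_parent]
    exact List.take_prefix _ _
  · rw [val_iterate_parent, Nat.sub_sub_self h.length_le]
    exact (List.prefix_iff_eq_take.mp h).symm

theorem exists_eq_append_of_adj {t : BinTree V} {x y : t.Pos} (h : t.posGraph.Adj x y) :
    y = parent x ∨ ∃ b, y.1 = x.1 ++ [b] := by
  obtain ⟨hne, h | h⟩ := h
  · exact Or.inl (Subtype.ext h.symm)
  · have hy : y.1 ≠ [] := fun hy => hne (Subtype.ext (by rw [← h, hy]; rfl))
    exact Or.inr ⟨_, by rw [← h, List.dropLast_append_getLast hy]⟩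

theorem ncard_neighborSet_le_three (t : BinTree V) (x : t.Pos) :
    (t.posGraph.neighborSet x).ncard ≤ 3 := by
  have hmaps : ∀ y ∈ t.posGraph.neighborSet x,
      y.1 ∈ ({x.1.dropLast, x.1 ++ [false], x.1 ++ [true]} : Set (List Bool)) := by
    intro y hy
    rcases exists_eq_append_of_adj hy with rfl | ⟨_ | _, hb⟩
    exacts [Or.inl rfl, Or.inr (Or.inl hb), Or.inr (Or.inr hb)]
  calc (t.posGraph.neighborSet x).ncard
      ≤ ({x.1.dropLast, x.1 ++ [false], x.1 ++ [true]} : Set (List Bool)).ncard :=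
        Set.ncard_le_ncard_of_injOn _ hmaps Subtype.val_injective.injOn
    _ ≤ 3 := (Set.ncard_insert_le _ _).trans (by
        have := Set.ncard_insert_le (x.1 ++ [false]) {x.1 ++ [true]}
        rw [Set.ncard_singleton] at this
        omega)

theorem ncard_neighborSet_eq_one_iff {l r : BinTree V} (x : (node l r).Pos) :
    ((node l r).posGraph.neighborSet x).ncard = 1 ↔
      ∃ v, (node l r).subtree x.1 = some (leaf v) := by
  obtain ⟨s, hs⟩ := Option.isSome_iff_exists.mp x.2
  cases s with
  | leaf v =>
    have hx : x ≠ root _ := by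
      rintro rfl
      simp [root] at hs
    have hnbr : (node l r).posGraph.neighborSet x = {parent x} := by
      ext y
      refine ⟨fun hy => ?_, fun hy => hy ▸ (isParentMap_parent _).adj_map hx⟩
      rcases exists_eq_append_of_adj hy with h | ⟨b, hb⟩
      · exact h
      · have hy := y.2
        rw [hb, subtree_append, hs] at hy
        cases b <;> simp [subtree] at hy
    simp [hnbr, hs]
  | node l' r' =>
    let child (b : Bool) : (node l r).Pos :=
      ⟨x.1 ++ [b], by rw [subtree_append, hs]; cases b <;> simp [subtree]⟩
    have hadj (b : Bool) : (node l r).posGraph.Adj x (child b) :=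
      ⟨fun h => by simpa [child] using congrArg (·.1.length) h, Or.inr (by simp [child])⟩
    have hne : child false ≠ child true := fun h => by simpa [child] using congrArg (·.1) h
    have h2 : 2 ≤ ((node l r).posGraph.neighborSet x).ncard := by
      rw [← Set.ncard_pair hne]
      exact Set.ncard_le_ncard (by rintro _ (rfl | rfl) <;> exact hadj _)
    simp only [hs, Option.some.injEq, reduceCtorEq, exists_false, iff_false]
    omega

noncomputable def leafLabel {l r : BinTree V}
    (x : {x : (node l r).Pos // ((node l r).posGraph.neighborSet x).ncard = 1}) : V :=
  ((ncard_neighborSet_eq_one_iff x.1).mp x.2).choose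

theorem subtree_eq_leaf_leafLabel {l r : BinTree V}
    (x : {x : (node l r).Pos // ((node l r).posGraph.neighborSet x).ncard = 1}) :
    (node l r).subtree x.1.1 = some (leaf (leafLabel x)) :=
  ((ncard_neighborSet_eq_one_iff x.1).mp x.2).choose_spec

theorem leafLabel_bijective {l r : BinTree V} (ht : (node l r).Nodup)
    (hV : ∀ v, v ∈ (node l r).labels) : Function.Bijective (leafLabel (l := l) (r := r)) := by
  refine ⟨fun x y hxy => ?_, fun v => ?_⟩
  · have hx := subtree_eq_leaf_leafLabel x
    rw [hxy] at hx
    exact Subtype.ext (Subtype.ext (ht.eq_of_subtree_eq_leaf hx (subtree_eq_leaf_leafLabel y)))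
  · obtain ⟨x, hx⟩ := mem_labels_iff.mp (hV v)
    let p : (node l r).Pos := ⟨x, by simp [hx]⟩
    let y : {x : (node l r).Pos // ((node l r).posGraph.neighborSet x).ncard = 1} :=
      ⟨p, (ncard_neighborSet_eq_one_iff p).mpr ⟨v, hx⟩⟩
    have h := (subtree_eq_leaf_leafLabel y).symm.trans hx
    simp only [Option.some.injEq, leaf.injEq] at h
    exact ⟨y, h⟩

noncomputable def toBranchDecomp {l r : BinTree V} (ht : (node l r).Nodup)
    (hV : ∀ v, v ∈ (node l r).labels) : BranchDecomp V (node l r).Pos :=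
  have : Nonempty (node l r).Pos := ⟨root _⟩
  ⟨posGraph _, (isParentMap_parent _).isTree, ncard_neighborSet_le_three _,
    Equiv.ofBijective _ (leafLabel_bijective ht hV)⟩

theorem subtree_toBranchDecomp_leafEquiv_symm {l r : BinTree V} (ht : (node l r).Nodup)
    (hV : ∀ v, v ∈ (node l r).labels) (v : V) :
    (node l r).subtree ((toBranchDecomp ht hV).leafEquiv.symm v).1.1 = some (leaf v) := by
  have h := subtree_eq_leaf_leafLabel ((Equiv.ofBijective _ (leafLabel_bijective ht hV)).symm v)
  rwa [Equiv.ofBijective_apply_symm_apply leafLabel] at h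

theorem mmw_le {G : SimpleGraph V} {k : ℕ} {l r : BinTree V}
    (ht : (node l r).Nodup) (hV : ∀ v, v ∈ (node l r).labels)
    (hk : ∀ x s, (node l r).subtree x = some s → mmValue G s.labels ≤ k) : mmw G ≤ k := by
  refine Nat.sInf_le ⟨_, Fintype.ofFinite _, toBranchDecomp ht hV, fun a b hab =>
    BranchDecomp.mmValue_side_le (isParentMap_parent _) (fun y => ?_) hab⟩
  obtain ⟨s, hs⟩ := Option.isSome_iff_exists.mp y.2
  convert hk y.1 s hs using 2
  ext v
  exact mem_descendants_parent_iff.trans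
    (prefix_iff_mem_labels ht (subtree_toBranchDecomp_leafEquiv_symm ht hV v) hs)

end BinTree

section HasRootedDecomp

open BinTree

variable {V : Type} {G : SimpleGraph V} {k : ℕ} {A B : Set V}

variable (G k) in
def HasRootedDecomp (A : Set V) : Prop :=
  A = ∅ ∨ ∃ t : BinTree V, t.Nodup ∧ t.labels = A ∧
    ∀ x s, t.subtree x = some s → mmValue G s.labels ≤ k

theorem hasRootedDecomp_singleton [Finite V] (hk : 0 < k) (p : V) :
    HasRootedDecomp G k {p} := by
  refine Or.inr ⟨leaf p, trivial, rfl, fun x s hs => ?_⟩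
  cases x <;> simp only [subtree, Option.some.injEq, reduceCtorEq] at hs
  subst hs
  exact (mmValue_singleton_le_one p).trans hk

theorem HasRootedDecomp.union (hA : HasRootedDecomp G k A) (hB : HasRootedDecomp G k B)
    (hAB : Disjoint A B) (hk : mmValue G (A ∪ B) ≤ k) : HasRootedDecomp G k (A ∪ B) := by
  rcases hA with rfl | ⟨l, hl, rfl, hlk⟩
  · simpa using hB
  rcases hB with rfl | ⟨r, hr, rfl, hrk⟩
  · exact (Set.union_empty _).symm ▸ Or.inr ⟨l, hl, rfl, hlk⟩
  refine Or.inr ⟨node l r, ⟨hl, hr, hAB⟩, rfl, fun x s hs => ?_⟩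
  rcases x with _ | ⟨_ | _, x⟩
  · simp only [subtree_nil, Option.some.injEq] at hs
    exact hs ▸ hk
  · exact hlk x s hs
  · exact hrk x s hs

theorem HasRootedDecomp.of_subset [Finite V] (hk : 0 < k) (hB : HasRootedDecomp G k B)
    (hBA : B ⊆ A) (hgood : ∀ X, B ⊆ X → X ⊆ A → mmValue G X ≤ k) : HasRootedDecomp G k A := by
  classical
  suffices h : ∀ F : Finset V, ↑F ⊆ A → HasRootedDecomp G k (B ∪ F) by
    have hfin := (A \ B).toFinite
    simpa [hfin.coe_toFinset, Set.union_sdiff_cancel hBA] using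
      h hfin.toFinset (by simp)
  intro F
  induction F using Finset.induction_on with
  | empty => simpa using hB
  | insert a F _ ih =>
    intro hF
    rw [Finset.coe_insert, Set.insert_subset_iff] at hF
    have hBF := ih hF.2
    rw [Finset.coe_insert, Set.union_insert]
    by_cases ha : a ∈ B ∪ F
    · rwa [Set.insert_eq_of_mem ha]
    · rw [Set.insert_eq, Set.union_comm]
      refine hBF.union (hasRootedDecomp_singleton hk a) (Set.disjoint_singleton_right.mpr ha)
        (hgood _ (Set.subset_union_left.trans Set.subset_union_left) ?_)
      exact Set.union_subset (Set.union_subset hBA hF.2) (Set.singleton_subset_iff.mpr hF.1)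

theorem hasRootedDecomp_biUnion {ι : Type*} {I : Set ι} (hI : I.Finite) (hI2 : I.ncard ≤ 2)
    {f : ι → Set V} (hf : ∀ i ∈ I, HasRootedDecomp G k (f i)) (hdisj : I.PairwiseDisjoint f)
    (hk : mmValue G (⋃ i ∈ I, f i) ≤ k) : HasRootedDecomp G k (⋃ i ∈ I, f i) := by
  obtain h | h | h : I.ncard = 0 ∨ I.ncard = 1 ∨ I.ncard = 2 := by omega
  · rw [(Set.ncard_eq_zero hI).mp h]
    rw [Set.biUnion_empty]
    exact Or.inl rfl
  · obtain ⟨i, rfl⟩ := Set.ncard_eq_one.mp h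
    simpa using hf i rfl
  · obtain ⟨i, j, hij, rfl⟩ := Set.ncard_eq_two.mp h
    simp only [Set.biUnion_insert, Set.biUnion_singleton] at hk ⊢
    exact (hf i (by simp)).union (hf j (by simp)) (hdisj (by simp) (by simp) hij) hk

theorem mmw_le_of_hasRootedDecomp_univ [Nontrivial V] (h : HasRootedDecomp G k Set.univ) :
    mmw G ≤ k := by
  obtain h | ⟨t, ht, hV, hk⟩ := h
  · exact absurd h Set.univ_nonempty.ne_empty
  cases t with
  | leaf v =>
    obtain ⟨w, hw⟩ := exists_ne v
    have hw' : w ∈ (leaf v).labels := hV ▸ Set.mem_univ w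
    exact absurd hw' hw
  | node l r => exact BinTree.mmw_le ht (fun v => hV ▸ Set.mem_univ v) hk

end HasRootedDecomp

section Subtrees

variable {V N : Type} {G : SimpleGraph V} {T : SimpleGraph N} {q : N → N} {r b : N}
  {S : V → Set N} {σ : V → N} {k : ℕ}

theorem IsParentMap.mem_of_isSubtree (hq : IsParentMap T q r) {R : Set N} (hR : IsSubtree T R)
    {x y : N} (hx : x ∈ R) (hxb : x ∈ descendants q b) (hy : y ∈ R)
    (hyb : y ∉ descendants q b) : b ∈ R ∧ q b ∈ R :=
  have ⟨p, _, hp⟩ := hR.2 x hx y hy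
  have h := hq.mem_support_of_mem_descendants p hxb hyb
  ⟨hp _ h.1, hp _ h.2⟩

variable [Finite V] (hq : IsParentMap T q r) (hS : ∀ u, IsSubtree T (S u))
  (hadj : ∀ ⦃u v : V⦄, G.Adj u v → (S u ∩ S v).Nonempty) (hσ : ∀ u, σ u ∈ S u ∧ q (σ u) ∈ S u)
include hq hS hadj hσ

theorem mmValue_le_of_subset_preimage_descendants (hk : {u | q b ∈ S u ∧ b ∈ S u}.ncard ≤ k)
    {X : Set V} (hBX : σ ⁻¹' (descendants q b \ {b}) ⊆ X)
    (hXB : X ⊆ σ ⁻¹' (descendants q b \ {b}) ∪ {u | q b ∈ S u ∧ b ∈ S u}) :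
    mmValue G X ≤ k := by
  refine mmValue_le_of_cut_cover _ hk fun u v huv hu hv => ?_
  obtain ⟨huσ, -⟩ | huC := hXB hu
  · by_cases hvσ : σ v = b
    · exact Or.inr ⟨hvσ ▸ (hσ v).2, hvσ ▸ (hσ v).1⟩
    have hvσ : σ v ∉ descendants q b := fun h => hv (hBX ⟨h, hvσ⟩)
    obtain ⟨s, hsu, hsv⟩ := hadj huv
    by_cases hs : s ∈ descendants q b
    · exact Or.inr (hq.mem_of_isSubtree (hS v) hsv hs (hσ v).1 hvσ).symm
    · exact Or.inl (hq.mem_of_isSubtree (hS u) (hσ u).1 huσ hsu hs).symm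
  · exact Or.inl huC

theorem hasRootedDecomp_preimage_descendants [Finite N] (hk : 0 < k)
    (hdeg : ∀ x : N, (T.neighborSet x).ncard ≤ 3)
    (hcount : ∀ ⦃a b : N⦄, T.Adj a b → {u : V | a ∈ S u ∧ b ∈ S u}.ncard ≤ k) (hb : b ≠ r) :
    HasRootedDecomp G k (σ ⁻¹' descendants q b) := by
  induction hn : (descendants q b).ncard using Nat.strong_induction_on generalizing b with
  | _ n ih =>
    have hkb := hcount (hq.adj_map hb).symm
    have hunion : σ ⁻¹' (descendants q b \ {b}) = ⋃ c ∈ children q b, σ ⁻¹' descendants q c := by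
      rw [hq.descendants_diff_singleton, Set.preimage_iUnion₂]
    have hB : HasRootedDecomp G k (σ ⁻¹' (descendants q b \ {b})) := by
      rw [hunion]
      refine hasRootedDecomp_biUnion (Set.toFinite _)
        (by have := hq.ncard_children_add_one_le hb; have := hdeg b; omega)
        (fun c hc => ih _ ?_ (hq.ne_root_of_mem_children hc) rfl)
        (fun c hc c' hc' hne => (hq.pairwiseDisjoint_descendants_children b hc hc' hne).preimage σ)
        (hunion ▸ mmValue_le_of_subset_preimage_descendants hq hS hadj hσ hkb subset_rfl
          Set.subset_union_left)
      exact hn ▸ Set.ncard_lt_ncard (hq.descendants_ssubset_of_mem_children hc)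
    refine hB.of_subset hk (Set.preimage_mono Set.sdiff_subset) fun X hBX hXA =>
      mmValue_le_of_subset_preimage_descendants hq hS hadj hσ hkb hBX (hXA.trans fun u hu => ?_)
    by_cases hub : σ u = b
    · exact Or.inr ⟨hub ▸ (hσ u).2, hub ▸ (hσ u).1⟩
    · exact Or.inl ⟨hu, hub⟩

end Subtrees

/-- If `G` has an edge, `k ≥ 1`, and there is a tree `T` of
maximum degree at most 3 and a nontrivial subtree `T_u` of `T` for each vertex
`u` of `G` such that (i) if `uv ∈ E(G)` then `T_u` and `T_v` share a vertex of
`T`, and (ii) each edge of `T` belongs to at most `k` of the subtrees, then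
`mmw(G) ≤ k`. -/
theorem mmw_le_of_subtrees {V : Type} [Fintype V] (G : SimpleGraph V)
    (hE : G.edgeSet.Nonempty) (k : ℕ) (hk : 0 < k)
    (N : Type) [Fintype N] (T : SimpleGraph N) (hT : T.IsTree)
    (hdeg : ∀ x : N, (T.neighborSet x).ncard ≤ 3)
    (S : V → Set N)
    (hsub : ∀ u : V, IsNontrivialSubtree T (S u))
    (hadj : ∀ ⦃u v : V⦄, G.Adj u v → (S u ∩ S v).Nonempty)
    (hcount : ∀ ⦃a b : N⦄, T.Adj a b → {u : V | a ∈ S u ∧ b ∈ S u}.ncard ≤ k) :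
    mmw G ≤ k := by
  classical
  obtain ⟨⟨u₀, v₀⟩, huv⟩ := hE
  have : Nontrivial V := ⟨⟨u₀, v₀, G.ne_of_adj huv⟩⟩
  obtain ⟨a, -, b, -, hab⟩ := (hsub u₀).2
  have : Nontrivial N := ⟨⟨a, b, hab.ne⟩⟩
  obtain ⟨m, hm⟩ := hT.exists_vert_degree_one_of_nontrivial
  obtain ⟨c, hmc, hc⟩ := degree_eq_one_iff_existsUnique_adj.mp hm
  obtain ⟨q, hq⟩ := hT.exists_isParentMap m
  choose σ hσS hσm hσq using fun u => hq.exists_mem_ne_root_map_mem (hsub u).2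
  have huniv : σ ⁻¹' descendants q c = Set.univ :=
    Set.eq_univ_of_forall fun u => hq.mem_descendants_of_forall_adj_eq hc (hσm u)
  refine mmw_le_of_hasRootedDecomp_univ (huniv ▸ ?_)
  exact hasRootedDecomp_preimage_descendants hq (fun u => (hsub u).1) hadj
    (fun u => ⟨hσS u, hσq u⟩) hk hdeg hcount hmc.ne'
end
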